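/- arXiv:2404.14919 — 3 statements merged into one kernel-verified Lean document; each statement's English description precedes it below -/
import Mathlib

section
/- Let A be an axiom set such that the Hilbert system K+A contains every instance of axiom .2 (¬K_i ¬K_i φ → K_i ¬K_i ¬φ). Suppose V, U, W are maximal consistent sets of formulas with respect to K+A, the set of agent labels is countable, and for some agent i both {φ : K_i φ ∈ V} ⊆ U and {φ : K_i φ ∈ V} ⊆ W. Then there exists a maximal consistent set X with {φ : K_i φ ∈ U} ⊆ X and {φ : K_i φ ∈ W} ⊆ X; i.e., the canonical frame of K+A is weakly directed. -/
/-- Formulas of multi-agent modal logic: ⊥, variables, ∨, ∧, →, K_i. -/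
inductive Form (α P : Type) : Type
  | fls : Form α P
  | var : P → Form α P
  | dis : Form α P → Form α P → Form α P
  | con : Form α P → Form α P → Form α P
  | imp : Form α P → Form α P → Form α P
  | box : α → Form α P → Form α P

namespace Form

/-- Negation ¬φ := φ → ⊥. -/
def neg {α P : Type} (p : Form α P) : Form α P := p.imp .fls

/-- Verum ⊤ := ¬⊥. -/
def top {α P : Type} : Form α P := neg .fls

/-- Biconditional φ ↔ ψ := (φ → ψ) ∧ (ψ → φ). -/
def iff' {α P : Type} (p q : Form α P) : Form α P := (p.imp q).con (q.imp p)

/-- Dual operator L_i φ := ¬ K_i ¬ φ. -/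
def dia {α P : Type} (i : α) (p : Form α P) : Form α P := (Form.box i p.neg).neg

end Form

/-- Boolean evaluation of a formula, treating modal subformulas as atoms
(interpreted by `h`). -/
def beval {α P : Type} (g : P → Bool) (h : Form α P → Bool) : Form α P → Bool
  | .fls => false
  | .var x => g x
  | .dis p q => beval g h p || beval g h q
  | .con p q => beval g h p && beval g h q
  | .imp p q => !(beval g h p) || beval g h q
  | .box i p => h (.box i p)

/-- A propositional tautology: true under every valuation of the variables and
of the modal subformulas. -/
def Tautology {α P : Type} (p : Form α P) : Prop := ∀ g h, beval g h p = true

/-- Hilbert system K + the axiom set `Ax`: all propositional tautologies,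
axiom K, the extra axioms, closed under Modus Ponens and Necessitation. -/
inductive Prf {α P : Type} (Ax : Form α P → Prop) : Form α P → Prop
  | taut {p} : Tautology p → Prf Ax p
  | axK {i p q} : Prf Ax (((Form.box i (p.imp q)).con (Form.box i p)).imp (Form.box i q))
  | ax {p} : Ax p → Prf Ax p
  | mp {p q} : Prf Ax (p.imp q) → Prf Ax p → Prf Ax q
  | nec {i p} : Prf Ax p → Prf Ax (Form.box i p)

/-- The empty axiom set: `Prf KAx` is the pure system K. -/
def KAx {α P : Type} : Form α P → Prop := fun _ => False

/-- Axiom T: K_i φ → φ. -/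
def AxT {α P : Type} (φ : Form α P) : Prop := ∃ i p, φ = (Form.box i p).imp p

/-- Axiom 4: K_i φ → K_i K_i φ. -/
def Ax4 {α P : Type} (φ : Form α P) : Prop :=
  ∃ i p, φ = (Form.box i p).imp (Form.box i (Form.box i p))

/-- Axiom .2: ¬K_i ¬K_i φ → K_i ¬K_i ¬φ. -/
def Ax2 {α P : Type} (φ : Form α P) : Prop :=
  ∃ i p, φ = ((Form.box i (Form.box i p).neg).neg).imp (Form.box i (Form.box i p.neg).neg)

/-- Axioms of S4: T and 4. -/
def AxS4 {α P : Type} (φ : Form α P) : Prop := AxT φ ∨ Ax4 φ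

/-- Axioms of S4.2: T, 4 and .2. -/
def AxS42 {α P : Type} (φ : Form α P) : Prop := AxT φ ∨ Ax4 φ ∨ Ax2 φ

/-- Iterated implication ψ₁ → (ψ₂ → … (ψ_k → φ)…); for the empty list it is φ. -/
def imply {α P : Type} : List (Form α P) → Form α P → Form α P
  | [], q => q
  | p :: l, q => p.imp (imply l q)

/-- Conjunction ψ₁ ∧ … ∧ ψ_k (∧ ⊤); for the empty list it is ⊤. -/
def conj {α P : Type} : List (Form α P) → Form α P
  | [] => Form.top
  | p :: l => p.con (conj l)

/-- A set Γ is consistent w.r.t. K+Ax if no finite list of its elements derives ⊥. -/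
def Consistent {α P : Type} (Ax : Form α P → Prop) (Γ : Set (Form α P)) : Prop :=
  ¬ ∃ l : List (Form α P), (∀ ψ ∈ l, ψ ∈ Γ) ∧ Prf Ax (imply l Form.fls)

/-- Γ is maximal consistent if it is consistent and contains φ or ¬φ for every φ. -/
def MaximalConsistent {α P : Type} (Ax : Form α P → Prop) (Γ : Set (Form α P)) : Prop :=
  Consistent Ax Γ ∧ ∀ φ : Form α P, φ ∈ Γ ∨ Form.neg φ ∈ Γ

/-- A Kripke model: a valuation and one accessibility relation per agent. -/
structure Kripke (α P W : Type) where
  val : W → P → Prop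
  rel : α → W → W → Prop

/-- Satisfaction of a formula at a world of a Kripke model. -/
def sat {α P W : Type} (M : Kripke α P W) : W → Form α P → Prop
  | _, .fls => False
  | w, .var x => M.val w x
  | w, .dis p q => sat M w p ∨ sat M w q
  | w, .con p q => sat M w p ∧ sat M w q
  | w, .imp p q => sat M w p → sat M w q
  | w, .box i p => ∀ v, M.rel i w v → sat M v p

/-- A family of relations is weakly directed (confluent). -/
def WeaklyDirected {α W : Type} (R : α → W → W → Prop) : Prop :=
  ∀ i v w u, R i v w → R i v u → ∃ x, R i w x ∧ R i u x

/-- Each relation is reflexive. -/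
def ReflexiveRel {α W : Type} (R : α → W → W → Prop) : Prop :=
  ∀ i w, R i w w

/-- Each relation is transitive. -/
def TransitiveRel {α W : Type} (R : α → W → W → Prop) : Prop :=
  ∀ i u v w, R i u v → R i v w → R i u w

section Aux

variable {α P : Type} {A : Form α P → Prop}

open Form

lemma taut_top : Tautology (Form.top : Form α P) := by
  intro g h; rfl

-- schema 1 / 19 / 23(special)
lemma taut_pair (p q : Form α P) : Tautology (p.imp (q.imp (p.con q))) := by
  intro g h; simp only [beval]
  cases beval g h p <;> cases beval g h q <;> rfl

lemma taut_con_left (a c : Form α P) : Tautology ((a.con c).imp a) := by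
  intro g h; simp only [beval]
  cases beval g h a <;> cases beval g h c <;> rfl

lemma taut_weak_con (a b c : Form α P) : Tautology ((c.imp a).imp ((b.con c).imp a)) := by
  intro g h; simp only [beval]
  cases beval g h a <;> cases beval g h b <;> cases beval g h c <;> rfl

lemma taut_imp_top (c : Form α P) : Tautology (c.imp Form.top) := by
  intro g h; simp only [beval, Form.top, Form.neg]
  cases beval g h c <;> rfl

lemma taut_con_intro (a c c' : Form α P) :
    Tautology ((c.imp a).imp ((c.imp c').imp (c.imp (a.con c')))) := by
  intro g h; simp only [beval]
  cases beval g h a <;> cases beval g h c <;> cases beval g h c' <;> rfl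

lemma taut_imp2_top (x y : Form α P) : Tautology (x.imp (y.imp Form.top)) := by
  intro g h; simp only [beval, Form.top, Form.neg]
  cases beval g h x <;> cases beval g h y <;> rfl

lemma taut_conj_cons1 (a c x y : Form α P) :
    Tautology ((x.imp a).imp ((x.imp (y.imp c)).imp (x.imp (y.imp (a.con c))))) := by
  intro g h; simp only [beval]
  cases beval g h a <;> cases beval g h c <;> cases beval g h x <;> cases beval g h y <;> rfl

lemma taut_conj_cons2 (a c x y : Form α P) :
    Tautology ((y.imp a).imp ((x.imp (y.imp c)).imp (x.imp (y.imp (a.con c))))) := by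
  intro g h; simp only [beval]
  cases beval g h a <;> cases beval g h c <;> cases beval g h x <;> cases beval g h y <;> rfl

lemma taut_imp_top_imp (q : Form α P) : Tautology (q.imp (Form.top.imp q)) := by
  intro g h; simp only [beval, Form.top, Form.neg]
  cases beval g h q <;> rfl

lemma taut_itc_cons (I a c q : Form α P) :
    Tautology ((I.imp (c.imp q)).imp ((a.imp I).imp ((a.con c).imp q))) := by
  intro g h; simp only [beval]
  cases beval g h I <;> cases beval g h a <;> cases beval g h c <;> cases beval g h q <;> rfl

lemma taut_id_imp (a q : Form α P) : Tautology ((a.imp q).imp (a.imp q)) := by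
  intro g h; simp only [beval]
  cases beval g h a <;> cases beval g h q <;> rfl

lemma taut_swap_cons (I J a b : Form α P) :
    Tautology ((I.imp (a.imp J)).imp ((b.imp I).imp (a.imp (b.imp J)))) := by
  intro g h; simp only [beval]
  cases beval g h I <;> cases beval g h J <;> cases beval g h a <;> cases beval g h b <;> rfl

lemma taut_cti_cons (a c q : Form α P) :
    Tautology (((a.con c).imp q).imp (c.imp (a.imp q))) := by
  intro g h; simp only [beval]
  cases beval g h a <;> cases beval g h c <;> cases beval g h q <;> rfl

lemma taut_dne_like (p : Form α P) : Tautology (p.imp (p.neg.imp Form.fls)) := by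
  intro g h; simp only [beval, Form.neg]
  cases beval g h p <;> rfl

lemma taut_mp_list (p q : Form α P) :
    Tautology ((p.imp q).imp (p.imp (q.neg.imp Form.fls))) := by
  intro g h; simp only [beval, Form.neg]
  cases beval g h p <;> cases beval g h q <;> rfl

lemma taut_combine_bot (x y c : Form α P) :
    Tautology ((x.imp (y.imp c)).imp ((c.imp Form.fls).imp (x.imp (y.imp Form.fls)))) := by
  intro g h; simp only [beval]
  cases beval g h x <;> cases beval g h y <;> cases beval g h c <;> rfl

lemma taut_contrapose (x y : Form α P) :
    Tautology ((x.imp (y.imp Form.fls)).imp (y.imp x.neg)) := by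
  intro g h; simp only [beval, Form.neg]
  cases beval g h x <;> cases beval g h y <;> rfl

lemma taut_rep_cons (φ c : Form α P) :
    Tautology ((φ.imp c).imp (φ.imp (φ.con c))) := by
  intro g h; simp only [beval]
  cases beval g h φ <;> cases beval g h c <;> rfl

lemma taut_reorg (x y φ : Form α P) :
    Tautology ((x.imp (y.imp Form.fls)).imp ((φ.imp y).imp (x.imp (φ.imp Form.fls)))) := by
  intro g h; simp only [beval]
  cases beval g h x <;> cases beval g h y <;> cases beval g h φ <;> rfl

lemma taut_final (c x y φ : Form α P) :
    Tautology ((c.imp x).imp ((c.imp y).imp ((x.imp (φ.imp Form.fls)).imp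
      ((y.imp (φ.neg.imp Form.fls)).imp (c.imp Form.fls))))) := by
  intro g h; simp only [beval, Form.neg]
  cases beval g h c <;> cases beval g h x <;> cases beval g h y <;> cases beval g h φ <;> rfl

/-! ### Derived proof rules -/

lemma conj_imp_mem {a : Form α P} : ∀ {l : List (Form α P)}, a ∈ l →
    Prf A ((conj l).imp a)
  | b :: l, h => by
    rcases List.mem_cons.mp h with h | h
    · subst h; exact Prf.taut (taut_con_left a (conj l))
    · exact Prf.mp (Prf.taut (taut_weak_con a b (conj l))) (conj_imp_mem h)

lemma conj_sub : ∀ {l' l : List (Form α P)}, (∀ a ∈ l', a ∈ l) →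
    Prf A ((conj l).imp (conj l'))
  | [], l, _ => Prf.taut (taut_imp_top (conj l))
  | a :: l', l, h => by
    have h1 : Prf A ((conj l).imp a) := conj_imp_mem (h a (by simp))
    have h2 : Prf A ((conj l).imp (conj l')) :=
      conj_sub (fun b hb => h b (by simp [hb]))
    exact Prf.mp (Prf.mp (Prf.taut (taut_con_intro a (conj l) (conj l'))) h1) h2

lemma conj_conj {l₁ l₂ : List (Form α P)} : ∀ {l : List (Form α P)},
    (∀ a ∈ l, a ∈ l₁ ∨ a ∈ l₂) →
    Prf A ((conj l₁).imp ((conj l₂).imp (conj l)))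
  | [], _ => Prf.taut (taut_imp2_top _ _)
  | a :: l, h => by
    have IH : Prf A ((conj l₁).imp ((conj l₂).imp (conj l))) :=
      conj_conj (fun b hb => h b (by simp [hb]))
    rcases h a (by simp) with ha | ha
    · exact Prf.mp (Prf.mp (Prf.taut (taut_conj_cons1 a (conj l) (conj l₁) (conj l₂)))
        (conj_imp_mem ha)) IH
    · exact Prf.mp (Prf.mp (Prf.taut (taut_conj_cons2 a (conj l) (conj l₁) (conj l₂)))
        (conj_imp_mem ha)) IH

lemma imply_to_conj : ∀ (l : List (Form α P)) (q : Form α P),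
    Prf A ((imply l q).imp ((conj l).imp q))
  | [], q => Prf.taut (taut_imp_top_imp q)
  | a :: l, q => by
    have IH : Prf A ((imply l q).imp ((conj l).imp q)) := imply_to_conj l q
    exact Prf.mp (Prf.taut (taut_itc_cons (imply l q) a (conj l) q)) IH

lemma imply_swap : ∀ (l : List (Form α P)) (a q : Form α P),
    Prf A ((imply l (a.imp q)).imp (a.imp (imply l q)))
  | [], a, q => Prf.taut (taut_id_imp a q)
  | b :: l, a, q => by
    have IH : Prf A ((imply l (a.imp q)).imp (a.imp (imply l q))) := imply_swap l a q
    exact Prf.mp (Prf.taut (taut_swap_cons (imply l (a.imp q)) (imply l q) a b)) IH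

lemma conj_to_imply : ∀ {l : List (Form α P)} {q : Form α P},
    Prf A ((conj l).imp q) → Prf A (imply l q)
  | [], q, h => Prf.mp h (Prf.taut taut_top)
  | a :: l, q, h => by
    have h1 : Prf A ((conj l).imp (a.imp q)) :=
      Prf.mp (Prf.taut (taut_cti_cons a (conj l) q)) h
    have h2 : Prf A (imply l (a.imp q)) := conj_to_imply h1
    exact Prf.mp (imply_swap l a q) h2

/-! ### МCS facts -/

lemma mcs_not_both {Γ : Set (Form α P)} (hΓ : MaximalConsistent A Γ)
    {p : Form α P} (hp : p ∈ Γ) (hnp : p.neg ∈ Γ) : False := by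
  refine hΓ.1 ⟨[p, p.neg], ?_, ?_⟩
  · intro ψ hψ
    simp only [List.mem_cons, List.not_mem_nil, or_false] at hψ
    rcases hψ with rfl | rfl <;> assumption
  · exact Prf.taut (taut_dne_like p)

lemma mcs_mem_prf {Γ : Set (Form α P)} (hΓ : MaximalConsistent A Γ)
    {p : Form α P} (hp : Prf A p) : p ∈ Γ := by
  rcases hΓ.2 p with h | h
  · exact h
  · exfalso
    refine hΓ.1 ⟨[p.neg], ?_, ?_⟩
    · intro ψ hψ
      simp only [List.mem_cons, List.not_mem_nil, or_false] at hψ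
      subst hψ; assumption
    · exact Prf.mp (Prf.taut (taut_dne_like p)) hp

lemma mcs_mp {Γ : Set (Form α P)} (hΓ : MaximalConsistent A Γ)
    {p q : Form α P} (hpq : p.imp q ∈ Γ) (hp : p ∈ Γ) : q ∈ Γ := by
  rcases hΓ.2 q with h | h
  · exact h
  · exfalso
    refine hΓ.1 ⟨[p.imp q, p, q.neg], ?_, ?_⟩
    · intro ψ hψ
      simp only [List.mem_cons, List.not_mem_nil, or_false] at hψ
      rcases hψ with rfl | rfl | rfl <;> assumption
    · exact Prf.taut (taut_mp_list p q)

lemma mcs_con {Γ : Set (Form α P)} (hΓ : MaximalConsistent A Γ)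
    {p q : Form α P} (hp : p ∈ Γ) (hq : q ∈ Γ) : p.con q ∈ Γ :=
  mcs_mp hΓ (mcs_mp hΓ (mcs_mem_prf hΓ (Prf.taut (taut_pair p q))) hp) hq

lemma mcs_box_conj {Γ : Set (Form α P)} (hΓ : MaximalConsistent A Γ) (i : α) :
    ∀ {l : List (Form α P)}, (∀ a ∈ l, Form.box i a ∈ Γ) →
    Form.box i (conj l) ∈ Γ
  | [], _ => mcs_mem_prf hΓ (Prf.nec (Prf.taut taut_top))
  | a :: l, h => by
    have hKa : Form.box i a ∈ Γ := h a (by simp)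
    have hKc : Form.box i (conj l) ∈ Γ := mcs_box_conj hΓ i (fun b hb => h b (by simp [hb]))
    have h1 : Form.box i (a.imp ((conj l).imp (a.con (conj l)))) ∈ Γ :=
      mcs_mem_prf hΓ (Prf.nec (Prf.taut (taut_pair a (conj l))))
    have h2 : Form.box i ((conj l).imp (a.con (conj l))) ∈ Γ :=
      mcs_mp hΓ (mcs_mem_prf hΓ Prf.axK) (mcs_con hΓ h1 hKa)
    exact mcs_mp hΓ (mcs_mem_prf hΓ Prf.axK) (mcs_con hΓ h2 hKc)

/-! ### Splitting an inconsistent union -/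

lemma union_inconsistent {S₁ S₂ : Set (Form α P)}
    (h : ¬ Consistent A (S₁ ∪ S₂)) :
    ∃ l₁ l₂ : List (Form α P), (∀ ψ ∈ l₁, ψ ∈ S₁) ∧ (∀ ψ ∈ l₂, ψ ∈ S₂) ∧
      Prf A ((conj l₁).imp ((conj l₂).imp Form.fls)) := by
  classical
  rw [Consistent, not_not] at h
  obtain ⟨l, hmem, hprf⟩ := h
  refine ⟨l.filter (fun ψ => ψ ∈ S₁), l.filter (fun ψ => ψ ∉ S₁), ?_, ?_, ?_⟩
  · intro ψ hψ
    simp only [List.mem_filter, decide_eq_true_eq] at hψ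
    exact hψ.2
  · intro ψ hψ
    simp only [List.mem_filter, decide_eq_true_eq] at hψ
    rcases hmem ψ hψ.1 with h' | h'
    · exact absurd h' hψ.2
    · exact h'
  · have hcc : Prf A ((conj (l.filter (fun ψ => ψ ∈ S₁))).imp
        ((conj (l.filter (fun ψ => ψ ∉ S₁))).imp (conj l))) := by
      refine conj_conj (fun a ha => ?_)
      by_cases h' : a ∈ S₁
      · left; simp [List.mem_filter, ha, h']
      · right; simp [List.mem_filter, ha, h']
    have hbot : Prf A ((conj l).imp Form.fls) :=
      Prf.mp (imply_to_conj l Form.fls) hprf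
    exact Prf.mp (Prf.mp (Prf.taut (taut_combine_bot _ _ (conj l))) hcc) hbot

/-! ### Lindenbaum -/

lemma consistent_of_subset {Γ Δ : Set (Form α P)} (h : Γ ⊆ Δ)
    (hΔ : Consistent A Δ) : Consistent A Γ := by
  rintro ⟨l, hl, hprf⟩
  exact hΔ ⟨l, fun ψ hψ => h (hl ψ hψ), hprf⟩

lemma conj_of_rep {φ : Form α P} : ∀ {l : List (Form α P)}, (∀ a ∈ l, a = φ) →
    Prf A (φ.imp (conj l))
  | [], _ => Prf.taut (taut_imp_top φ)
  | a :: l, h => by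
    have ha : a = φ := h a (by simp)
    subst ha
    have IH : Prf A (a.imp (conj l)) := conj_of_rep (fun b hb => h b (by simp [hb]))
    exact Prf.mp (Prf.taut (taut_rep_cons a (conj l))) IH

lemma inconsistent_insert {Δ : Set (Form α P)} {φ : Form α P}
    (h : ¬ Consistent A (Δ ∪ {φ})) :
    ∃ l : List (Form α P), (∀ ψ ∈ l, ψ ∈ Δ) ∧ Prf A ((conj l).imp (φ.imp Form.fls)) := by
  obtain ⟨l₁, l₂, h₁, h₂, hprf⟩ := union_inconsistent h
  have hrep : Prf A (φ.imp (conj l₂)) := conj_of_rep (fun a ha => h₂ a ha)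
  exact ⟨l₁, h₁, Prf.mp (Prf.mp (Prf.taut (taut_reorg (conj l₁) (conj l₂) φ)) hprf) hrep⟩

lemma lindenbaum {Γ : Set (Form α P)} (hΓ : Consistent A Γ) :
    ∃ Δ : Set (Form α P), MaximalConsistent A Δ ∧ Γ ⊆ Δ := by
  classical
  set S : Set (Set (Form α P)) := {Δ | Consistent A Δ} with hS
  have hzorn := zorn_subset_nonempty S ?_ Γ hΓ
  · obtain ⟨Δ, hΓΔ, hmax⟩ := hzorn
    refine ⟨Δ, ⟨hmax.1, ?_⟩, hΓΔ⟩
    intro φ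
    by_contra hcon
    push_neg at hcon
    obtain ⟨hφ, hnφ⟩ := hcon
    have h1 : ¬ Consistent A (Δ ∪ {φ}) := by
      intro hc
      have := hmax.2 (y := Δ ∪ {φ}) hc Set.subset_union_left
      exact hφ (this (by simp))
    have h2 : ¬ Consistent A (Δ ∪ {φ.neg}) := by
      intro hc
      have := hmax.2 (y := Δ ∪ {φ.neg}) hc Set.subset_union_left
      exact hnφ (this (by simp))
    obtain ⟨l₁, hl₁, hp₁⟩ := inconsistent_insert h1
    obtain ⟨l₂, hl₂, hp₂⟩ := inconsistent_insert h2
    refine hmax.1 ⟨l₁ ++ l₂, ?_, ?_⟩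
    · intro ψ hψ
      rcases List.mem_append.mp hψ with h | h
      · exact hl₁ ψ h
      · exact hl₂ ψ h
    · refine conj_to_imply ?_
      have hx : Prf A ((conj (l₁ ++ l₂)).imp (conj l₁)) :=
        conj_sub (fun a ha => by simp [ha])
      have hy : Prf A ((conj (l₁ ++ l₂)).imp (conj l₂)) :=
        conj_sub (fun a ha => by simp [ha])
      exact Prf.mp (Prf.mp (Prf.mp (Prf.mp
        (Prf.taut (taut_final (conj (l₁ ++ l₂)) (conj l₁) (conj l₂) φ)) hx) hy) hp₁) hp₂
  · intro c hcS hchain hcne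
    refine ⟨⋃₀ c, ?_, fun s hs => Set.subset_sUnion_of_mem hs⟩
    rintro ⟨l, hl, hprf⟩
    have key : ∃ t ∈ c, ∀ ψ ∈ l, ψ ∈ t := by
      clear hprf
      induction l with
      | nil => exact ⟨hcne.choose, hcne.choose_spec, by simp⟩
      | cons a l IH =>
        obtain ⟨t, htc, ht⟩ := IH (fun ψ hψ => hl ψ (by simp [hψ]))
        obtain ⟨s, hsc, has⟩ := hl a (by simp)
        rcases eq_or_ne s t with rfl | hne
        · exact ⟨s, hsc, fun ψ hψ => by
            rcases List.mem_cons.mp hψ with rfl | h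
            · exact has
            · exact ht ψ h⟩
        · rcases hchain hsc htc hne with hst | hts
          · exact ⟨t, htc, fun ψ hψ => by
              rcases List.mem_cons.mp hψ with rfl | h
              · exact hst has
              · exact ht ψ h⟩
          · exact ⟨s, hsc, fun ψ hψ => by
              rcases List.mem_cons.mp hψ with rfl | h
              · exact has
              · exact hts (ht ψ h)⟩
    obtain ⟨t, htc, ht⟩ := key
    exact hcS htc ⟨l, ht, hprf⟩

end Aux

/-- If the Hilbert system K+A proves every instance of axiom .2,
V, U, W are maximal consistent sets w.r.t. K+A (agents and propositional
symbols countable), and {φ : K_i φ ∈ V} ⊆ U and {φ : K_i φ ∈ V} ⊆ W, then there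
is a maximal consistent X with {φ : K_i φ ∈ U} ⊆ X and {φ : K_i φ ∈ W} ⊆ X;
i.e., the canonical frame of K+A is weakly directed. -/
theorem canonical_frame_weakly_directed {α P : Type} [Countable α] [Countable P]
    (A : Form α P → Prop) (hA : ∀ φ : Form α P, Ax2 φ → Prf A φ)
    (V U W : Set (Form α P))
    (hV : MaximalConsistent A V) (hU : MaximalConsistent A U)
    (hW : MaximalConsistent A W) (i : α)
    (hVU : {φ : Form α P | Form.box i φ ∈ V} ⊆ U)
    (hVW : {φ : Form α P | Form.box i φ ∈ V} ⊆ W) :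
    ∃ X : Set (Form α P), MaximalConsistent A X ∧
      {φ : Form α P | Form.box i φ ∈ U} ⊆ X ∧
      {φ : Form α P | Form.box i φ ∈ W} ⊆ X := by
  have hcons : Consistent A ({φ : Form α P | Form.box i φ ∈ U} ∪
      {φ : Form α P | Form.box i φ ∈ W}) := by
    by_contra hc
    obtain ⟨l₁, l₂, h₁, h₂, hprf⟩ := union_inconsistent hc
    set a := conj l₁ with ha
    set b := conj l₂ with hb
    have hKaU : Form.box i a ∈ U := mcs_box_conj hU i h₁
    have hKbW : Form.box i b ∈ W := mcs_box_conj hW i h₂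
    -- from ⊢ a → b → ⊥ derive ⊢ b → ¬a, hence K_i ¬a ∈ W
    have hba : Prf A (b.imp a.neg) :=
      Prf.mp (Prf.taut (taut_contrapose a b)) hprf
    have hKnaW : Form.box i a.neg ∈ W :=
      mcs_mp hW (mcs_mem_prf hW Prf.axK)
        (mcs_con hW (mcs_mem_prf hW (Prf.nec hba)) hKbW)
    -- V side
    have hVside : (Form.box i (Form.box i a).neg).neg ∈ V := by
      rcases hV.2 (Form.box i (Form.box i a).neg) with h | h
      · exact (mcs_not_both hU hKaU (hVU h)).elim
      · exact h
    have hAx2 : Prf A (((Form.box i (Form.box i a).neg).neg).imp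
        (Form.box i (Form.box i a.neg).neg)) := hA _ ⟨i, a, rfl⟩
    have hKV : Form.box i (Form.box i a.neg).neg ∈ V :=
      mcs_mp hV (mcs_mem_prf hV hAx2) hVside
    have : (Form.box i a.neg).neg ∈ W := hVW hKV
    exact mcs_not_both hW hKnaW this
  obtain ⟨X, hX, hsub⟩ := lindenbaum hcons
  exact ⟨X, hX, fun φ hφ => hsub (Or.inl hφ), fun φ hφ => hsub (Or.inr hφ)⟩
end

section
/- Completeness of S4.2 from premises: let the sets of propositional symbols and of agent labels be countable, and let Γ ∪ {φ} be a set of formulas such that for every Kripke model M based on a weakly directed preorder (each accessibility relation R_i reflexive, transitive, and weakly directed) and every world w of M, if M, w ⊨ γ for all γ ∈ Γ then M, w ⊨ φ. Then there exist formulas γ₁, …, γ_m ∈ Γ such that ⊢_{S4.2} γ₁ → (γ₂ → … (γ_m → φ)…). -/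
namespace S42Aux

variable {α P : Type} {Ax : Form α P → Prop}

lemma prf_id (p : Form α P) : Prf Ax (p.imp p) :=
  Prf.taut fun g h => by simp only [beval]; cases beval g h p <;> rfl

lemma prf_k (p q : Form α P) : Prf Ax (p.imp (q.imp p)) :=
  Prf.taut fun g h => by
    simp only [beval]; cases beval g h p <;> cases beval g h q <;> rfl

lemma prf_weak {p : Form α P} (q : Form α P) (hp : Prf Ax p) : Prf Ax (q.imp p) :=
  (prf_k p q).mp hp

lemma prf_comp {p q r : Form α P} (h1 : Prf Ax (p.imp q)) (h2 : Prf Ax (q.imp r)) :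
    Prf Ax (p.imp r) := by
  have t : Prf Ax ((p.imp q).imp ((q.imp r).imp (p.imp r))) := Prf.taut fun g h => by
    simp only [beval]
    cases beval g h p <;> cases beval g h q <;> cases beval g h r <;> rfl
  exact (t.mp h1).mp h2

lemma prf_dimp {p q r : Form α P} (h : Prf Ax (q.imp r)) :
    Prf Ax ((p.imp q).imp (p.imp r)) := by
  have t : Prf Ax ((q.imp r).imp ((p.imp q).imp (p.imp r))) := Prf.taut fun g h => by
    simp only [beval]
    cases beval g h p <;> cases beval g h q <;> cases beval g h r <;> rfl
  exact t.mp h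

lemma prf_dimp2 {a X Y Z : Form α P} (h : Prf Ax (X.imp (Y.imp Z))) :
    Prf Ax ((a.imp X).imp ((a.imp Y).imp (a.imp Z))) := by
  have t : Prf Ax ((X.imp (Y.imp Z)).imp ((a.imp X).imp ((a.imp Y).imp (a.imp Z)))) :=
    Prf.taut fun g h => by
      simp only [beval]
      cases beval g h a <;> cases beval g h X <;> cases beval g h Y <;> cases beval g h Z <;> rfl
  exact t.mp h

lemma prf_swap_t (p q r : Form α P) : Prf Ax ((p.imp (q.imp r)).imp (q.imp (p.imp r))) :=
  Prf.taut fun g h => by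
    simp only [beval]
    cases beval g h p <;> cases beval g h q <;> cases beval g h r <;> rfl

lemma prf_contr_t (p q : Form α P) : Prf Ax ((p.imp (p.imp q)).imp (p.imp q)) :=
  Prf.taut fun g h => by
    simp only [beval]; cases beval g h p <;> cases beval g h q <;> rfl

lemma prf_dne (p : Form α P) : Prf Ax ((p.neg.imp Form.fls).imp p) :=
  Prf.taut fun g h => by
    simp only [Form.neg, beval]; cases beval g h p <;> rfl

lemma prf_absurd (p : Form α P) : Prf Ax (p.imp (p.neg.imp Form.fls)) :=
  Prf.taut fun g h => by
    simp only [Form.neg, beval]; cases beval g h p <;> rfl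

end S42Aux

namespace S42Aux

variable {α P : Type} {Ax : Form α P → Prop}

lemma imply_append (l1 l2 : List (Form α P)) (q : Form α P) :
    imply (l1 ++ l2) q = imply l1 (imply l2 q) := by
  induction l1 with
  | nil => rfl
  | cons a l ih => simp [imply, ih]

lemma imply_mp_schema (l : List (Form α P)) (p q : Form α P) :
    Prf Ax ((imply l (p.imp q)).imp ((imply l p).imp (imply l q))) := by
  induction l with
  | nil =>
    exact Prf.taut fun g h => by
      simp only [imply, beval]; cases beval g h p <;> cases beval g h q <;> rfl
  | cons a l ih => exact prf_dimp2 ih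

lemma imply_mp {l : List (Form α P)} {p q : Form α P}
    (h1 : Prf Ax (imply l (p.imp q))) (h2 : Prf Ax (imply l p)) : Prf Ax (imply l q) :=
  ((imply_mp_schema l p q).mp h1).mp h2

lemma imply_mono {p q : Form α P} (h : Prf Ax (p.imp q)) (l : List (Form α P)) :
    Prf Ax ((imply l p).imp (imply l q)) := by
  induction l with
  | nil => exact h
  | cons a l ih => exact prf_dimp ih

lemma imply_of_prf {p : Form α P} (h : Prf Ax p) (l : List (Form α P)) :
    Prf Ax (imply l p) := by
  induction l with
  | nil => exact h
  | cons a l ih => exact prf_weak _ ih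

lemma imply_exch (l : List (Form α P)) (p q : Form α P) :
    Prf Ax ((p.imp (imply l q)).imp (imply l (p.imp q))) := by
  induction l with
  | nil => exact prf_id _
  | cons a l ih => exact prf_comp (prf_swap_t p a (imply l q)) (prf_dimp ih)

lemma imply_exch' (l : List (Form α P)) (p q : Form α P) :
    Prf Ax ((imply l (p.imp q)).imp (p.imp (imply l q))) := by
  induction l with
  | nil => exact prf_id _
  | cons a l ih => exact prf_comp (prf_dimp ih) (prf_swap_t a p (imply l q))

lemma imply_head {l : List (Form α P)} {p q : Form α P}
    (h : Prf Ax (imply (p :: l) q)) : Prf Ax (imply l (p.imp q)) :=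
  (imply_exch l p q).mp h

lemma imply_head' {l : List (Form α P)} {p q : Form α P}
    (h : Prf Ax (imply l (p.imp q))) : Prf Ax (imply (p :: l) q) :=
  (imply_exch' l p q).mp h

lemma imply_mem_mp {l : List (Form α P)} {a q : Form α P}
    (ha : a ∈ l) (h : Prf Ax (imply l (a.imp q))) : Prf Ax (imply l q) := by
  induction l generalizing q with
  | nil => cases ha
  | cons b l ih =>
    rcases List.mem_cons.1 ha with rfl | ha
    · exact imply_head' ((imply_mono (prf_contr_t a q) l).mp (imply_head h))
    · have h2 := (imply_mono (prf_swap_t b a q) l).mp (imply_head h)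
      exact imply_head' (ih ha h2)

lemma imply_subset {l l' : List (Form α P)} {q : Form α P}
    (hsub : ∀ ψ ∈ l, ψ ∈ l') (h : Prf Ax (imply l q)) : Prf Ax (imply l' q) := by
  induction l generalizing q with
  | nil => exact imply_of_prf h l'
  | cons a l ih =>
    have h2 := ih (fun ψ hψ => hsub ψ (List.mem_cons_of_mem _ hψ)) (imply_head h)
    exact imply_mem_mp (hsub a (List.mem_cons_self)) h2

lemma prf_boxK (i : α) (p q : Form α P) :
    Prf Ax ((Form.box i (p.imp q)).imp ((Form.box i p).imp (Form.box i q))) := by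
  have t : Prf Ax ((((Form.box i (p.imp q)).con (Form.box i p)).imp (Form.box i q)).imp
      ((Form.box i (p.imp q)).imp ((Form.box i p).imp (Form.box i q)))) :=
    Prf.taut fun g h => by
      simp only [beval]
      cases h (Form.box i (p.imp q)) <;> cases h (Form.box i p) <;>
        cases h (Form.box i q) <;> rfl
  exact t.mp Prf.axK

lemma imply_box {l : List (Form α P)} {p : Form α P} (i : α)
    (h : Prf Ax (imply l p)) : Prf Ax (imply (l.map (Form.box i)) (Form.box i p)) := by
  induction l generalizing p with
  | nil => exact Prf.nec h
  | cons a l ih =>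
    have h3 := (imply_mono (prf_boxK i a p) _).mp (ih (imply_head h))
    exact imply_head' h3

end S42Aux

namespace S42Aux

variable {α P : Type} {Ax : Form α P → Prop}

lemma deduction {Γ : Set (Form α P)} {p q : Form α P} {l : List (Form α P)}
    (hl : ∀ ψ ∈ l, ψ ∈ insert p Γ) (h : Prf Ax (imply l q)) :
    ∃ l', (∀ ψ ∈ l', ψ ∈ Γ) ∧ Prf Ax (imply l' (p.imp q)) := by
  induction l generalizing q with
  | nil => exact ⟨[], by simp, prf_weak p h⟩
  | cons a l ih =>
    obtain ⟨l', hl', h'⟩ := ih (fun ψ hψ => hl ψ (List.mem_cons_of_mem _ hψ)) (imply_head h)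
    rcases Set.mem_insert_iff.1 (hl a (List.mem_cons_self)) with rfl | haΓ
    · exact ⟨l', hl', (imply_mono (prf_contr_t a q) l').mp h'⟩
    · refine ⟨a :: l', ?_, ?_⟩
      · intro ψ hψ
        rcases List.mem_cons.1 hψ with rfl | hh
        · exact haΓ
        · exact hl' _ hh
      · exact imply_head' ((imply_mono (prf_swap_t p a q) l').mp h')

/-- Derivability from a set of premises. -/
def prfFrom (Ax : Form α P → Prop) (Γ : Set (Form α P)) (p : Form α P) : Prop :=
  ∃ l : List (Form α P), (∀ ψ ∈ l, ψ ∈ Γ) ∧ Prf Ax (imply l p)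

lemma prfFrom_of_prf {Γ : Set (Form α P)} {p : Form α P} (h : Prf Ax p) :
    prfFrom Ax Γ p := ⟨[], by simp, h⟩

lemma prfFrom_of_mem {Γ : Set (Form α P)} {p : Form α P} (h : p ∈ Γ) :
    prfFrom Ax Γ p := ⟨[p], by simpa using h, prf_id p⟩

lemma prfFrom_mp {Γ : Set (Form α P)} {p q : Form α P}
    (h1 : prfFrom Ax Γ (p.imp q)) (h2 : prfFrom Ax Γ p) : prfFrom Ax Γ q := by
  obtain ⟨l1, m1, d1⟩ := h1
  obtain ⟨l2, m2, d2⟩ := h2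
  refine ⟨l1 ++ l2, ?_, ?_⟩
  · intro ψ hψ
    rcases List.mem_append.1 hψ with h | h
    · exact m1 _ h
    · exact m2 _ h
  · exact imply_mp (imply_subset (fun ψ h => List.mem_append_left _ h) d1)
      (imply_subset (fun ψ h => List.mem_append_right _ h) d2)

lemma consistent_of_insert {Γ : Set (Form α P)} {p : Form α P}
    (hΓ : Consistent Ax Γ) (h1 : ¬ Consistent Ax (insert p Γ))
    (h2 : ¬ Consistent Ax (insert p.neg Γ)) : False := by
  rw [Consistent, not_not] at h1 h2
  obtain ⟨l1, m1, d1⟩ := h1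
  obtain ⟨l2, m2, d2⟩ := h2
  obtain ⟨l1', m1', d1'⟩ := deduction m1 d1
  obtain ⟨l2', m2', d2'⟩ := deduction m2 d2
  apply hΓ
  refine ⟨l1' ++ l2', ?_, ?_⟩
  · intro ψ hψ
    rcases List.mem_append.1 hψ with h | h
    · exact m1' _ h
    · exact m2' _ h
  · have a1 : Prf Ax (imply (l1' ++ l2') (p.imp Form.fls)) :=
      imply_subset (fun ψ h => List.mem_append_left _ h) d1'
    have a2 : Prf Ax (imply (l1' ++ l2') ((p.imp Form.fls).imp Form.fls)) :=
      imply_subset (fun ψ h => List.mem_append_right _ h) d2'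
    exact imply_mp a2 a1

lemma chain_list {c : Set (Set (Form α P))} (hchain : IsChain (· ⊆ ·) c) (hne : c.Nonempty) :
    ∀ l : List (Form α P), (∀ ψ ∈ l, ψ ∈ ⋃₀ c) → ∃ t ∈ c, ∀ ψ ∈ l, ψ ∈ t := by
  intro l
  induction l with
  | nil => exact fun _ => ⟨hne.choose, hne.choose_spec, by simp⟩
  | cons a l ih =>
    intro hm
    obtain ⟨t, ht, hlt⟩ := ih (fun ψ h => hm ψ (List.mem_cons_of_mem _ h))
    obtain ⟨u, hu, hau⟩ := Set.mem_sUnion.1 (hm a (List.mem_cons_self))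
    rcases eq_or_ne t u with rfl | htu
    · exact ⟨t, ht, fun ψ hψ => by
        rcases List.mem_cons.1 hψ with rfl | hh
        · exact hau
        · exact hlt _ hh⟩
    · rcases hchain ht hu htu with h | h
      · exact ⟨u, hu, fun ψ hψ => by
          rcases List.mem_cons.1 hψ with rfl | hh
          · exact hau
          · exact h (hlt _ hh)⟩
      · exact ⟨t, ht, fun ψ hψ => by
          rcases List.mem_cons.1 hψ with rfl | hh
          · exact h hau
          · exact hlt _ hh⟩

lemma lindenbaum {Γ : Set (Form α P)} (h : Consistent Ax Γ) :
    ∃ S, Γ ⊆ S ∧ MaximalConsistent Ax S := by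
  have hub : ∀ c ⊆ {Δ : Set (Form α P) | Consistent Ax Δ}, IsChain (· ⊆ ·) c → c.Nonempty →
      ∃ ub ∈ {Δ : Set (Form α P) | Consistent Ax Δ}, ∀ s ∈ c, s ⊆ ub := by
    intro c hc hchain hne
    refine ⟨⋃₀ c, ?_, fun s hs => Set.subset_sUnion_of_mem hs⟩
    rintro ⟨l, ml, dl⟩
    obtain ⟨t, ht, hlt⟩ := chain_list hchain hne l ml
    exact hc ht ⟨l, hlt, dl⟩
  obtain ⟨m, hsub, hm⟩ := zorn_subset_nonempty {Δ : Set (Form α P) | Consistent Ax Δ} hub Γ h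
  refine ⟨m, hsub, hm.prop, ?_⟩
  intro φ
  by_contra hc
  push_neg at hc
  obtain ⟨h1, h2⟩ := hc
  have i1 : ¬ Consistent Ax (insert φ m) := fun hcc =>
    h1 (hm.2 hcc (Set.subset_insert _ _) (Set.mem_insert _ _))
  have i2 : ¬ Consistent Ax (insert φ.neg m) := fun hcc =>
    h2 (hm.2 hcc (Set.subset_insert _ _) (Set.mem_insert _ _))
  exact consistent_of_insert hm.prop i1 i2

section MCS

variable {S : Set (Form α P)} (hS : MaximalConsistent Ax S)
include hS

lemma mcs_closed {p : Form α P} (hp : prfFrom Ax S p) : p ∈ S := by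
  rcases hS.2 p with h | h
  · exact h
  · exfalso
    apply hS.1
    obtain ⟨l, m, d⟩ := hp
    refine ⟨p.neg :: l, ?_, ?_⟩
    · intro ψ hψ
      rcases List.mem_cons.1 hψ with rfl | hh
      · exact h
      · exact m _ hh
    · exact imply_head' ((imply_mono (prf_absurd p) l).mp d)

lemma mcs_prf {p : Form α P} (h : Prf Ax p) : p ∈ S := mcs_closed hS (prfFrom_of_prf h)

lemma mcs_mp {p q : Form α P} (hpq : p.imp q ∈ S) (hp : p ∈ S) : q ∈ S :=
  mcs_closed hS (prfFrom_mp (prfFrom_of_mem hpq) (prfFrom_of_mem hp))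

lemma mcs_not_fls : Form.fls ∉ S := fun h => hS.1 ⟨[Form.fls], by simpa using h, prf_id _⟩

lemma mcs_neg_iff {p : Form α P} : p.neg ∈ S ↔ p ∉ S := by
  constructor
  · intro hn hp
    exact mcs_not_fls hS (mcs_mp hS hn hp)
  · intro hp
    rcases hS.2 p with h | h
    · exact absurd h hp
    · exact h

lemma mcs_imp_iff {p q : Form α P} : p.imp q ∈ S ↔ (p ∈ S → q ∈ S) := by
  constructor
  · exact fun h hp => mcs_mp hS h hp
  · intro h
    by_cases hp : p ∈ S
    · exact mcs_mp hS (mcs_prf hS (prf_k q p)) (h hp)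
    · have hn : p.neg ∈ S := (mcs_neg_iff hS).2 hp
      have t : Prf Ax (p.neg.imp (p.imp q)) := Prf.taut fun g h => by
        simp only [Form.neg, beval]; cases beval g h p <;> cases beval g h q <;> rfl
      exact mcs_mp hS (mcs_prf hS t) hn

lemma mcs_con_iff {p q : Form α P} : p.con q ∈ S ↔ (p ∈ S ∧ q ∈ S) := by
  constructor
  · intro h
    have t1 : Prf Ax ((p.con q).imp p) := Prf.taut fun g h => by
      simp only [beval]; cases beval g h p <;> cases beval g h q <;> rfl
    have t2 : Prf Ax ((p.con q).imp q) := Prf.taut fun g h => by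
      simp only [beval]; cases beval g h p <;> cases beval g h q <;> rfl
    exact ⟨mcs_mp hS (mcs_prf hS t1) h, mcs_mp hS (mcs_prf hS t2) h⟩
  · rintro ⟨h1, h2⟩
    have t : Prf Ax (p.imp (q.imp (p.con q))) := Prf.taut fun g h => by
      simp only [beval]; cases beval g h p <;> cases beval g h q <;> rfl
    exact mcs_mp hS (mcs_mp hS (mcs_prf hS t) h1) h2

lemma mcs_dis_iff {p q : Form α P} : p.dis q ∈ S ↔ (p ∈ S ∨ q ∈ S) := by
  constructor
  · intro h
    by_contra hc
    push_neg at hc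
    have hp : p.neg ∈ S := (mcs_neg_iff hS).2 hc.1
    have hq : q.neg ∈ S := (mcs_neg_iff hS).2 hc.2
    have t : Prf Ax ((p.dis q).imp (p.neg.imp (q.neg.imp Form.fls))) := Prf.taut fun g h => by
      simp only [Form.neg, beval]; cases beval g h p <;> cases beval g h q <;> rfl
    exact mcs_not_fls hS (mcs_mp hS (mcs_mp hS (mcs_mp hS (mcs_prf hS t) h) hp) hq)
  · intro h
    have t1 : Prf Ax (p.imp (p.dis q)) := Prf.taut fun g h => by
      simp only [beval]; cases beval g h p <;> cases beval g h q <;> rfl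
    have t2 : Prf Ax (q.imp (p.dis q)) := Prf.taut fun g h => by
      simp only [beval]; cases beval g h p <;> cases beval g h q <;> rfl
    rcases h with h | h
    · exact mcs_mp hS (mcs_prf hS t1) h
    · exact mcs_mp hS (mcs_prf hS t2) h

end MCS

end S42Aux

namespace S42Aux

variable {α P : Type}

/-- Worlds of the canonical model: maximal consistent sets. -/
def canW (Ax : Form α P → Prop) : Type := {S : Set (Form α P) // MaximalConsistent Ax S}

/-- The canonical Kripke model. -/
def canM (Ax : Form α P → Prop) : Kripke α P (canW Ax) where
  val S x := Form.var x ∈ S.1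
  rel i S T := ∀ p : Form α P, Form.box i p ∈ S.1 → p ∈ T.1

variable {Ax : Form α P → Prop}

lemma truth (p : Form α P) (S : canW Ax) : sat (canM Ax) S p ↔ p ∈ S.1 := by
  induction p generalizing S with
  | fls => exact ⟨fun h => h.elim, fun h => absurd h (mcs_not_fls S.2)⟩
  | var x => exact Iff.rfl
  | dis p q ihp ihq =>
    constructor
    · rintro (h | h)
      · exact mcs_closed S.2 (prfFrom_mp (prfFrom_of_prf (Prf.taut fun g h => by
          simp only [beval]; cases beval g h p <;> cases beval g h q <;> rfl))
          (prfFrom_of_mem ((ihp S).1 h)))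
      · exact mcs_closed S.2 (prfFrom_mp (prfFrom_of_prf (Prf.taut fun g h => by
          simp only [beval]; cases beval g h p <;> cases beval g h q <;> rfl))
          (prfFrom_of_mem ((ihq S).1 h)))
    · intro h
      rcases (mcs_dis_iff S.2).1 h with h | h
      · exact Or.inl ((ihp S).2 h)
      · exact Or.inr ((ihq S).2 h)
  | con p q ihp ihq =>
    constructor
    · rintro ⟨h1, h2⟩
      exact (mcs_con_iff S.2).2 ⟨(ihp S).1 h1, (ihq S).1 h2⟩
    · intro h
      obtain ⟨h1, h2⟩ := (mcs_con_iff S.2).1 h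
      exact ⟨(ihp S).2 h1, (ihq S).2 h2⟩
  | imp p q ihp ihq =>
    constructor
    · intro h
      exact (mcs_imp_iff S.2).2 fun hp => (ihq S).1 (h ((ihp S).2 hp))
    · intro h hp
      exact (ihq S).2 ((mcs_imp_iff S.2).1 h ((ihp S).1 hp))
  | box i p ih =>
    constructor
    · intro hsat
      by_contra hnot
      have hcons : Consistent Ax (insert p.neg {q : Form α P | Form.box i q ∈ S.1}) := by
        rintro ⟨l, m, d⟩
        obtain ⟨l', m', d'⟩ := deduction m d
        have dd : Prf Ax (imply l' p) := (imply_mono (prf_dne p) l').mp d'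
        apply hnot
        refine mcs_closed S.2 ⟨l'.map (Form.box i), ?_, imply_box i dd⟩
        intro ψ hψ
        obtain ⟨q, hq, rfl⟩ := List.mem_map.1 hψ
        exact m' q hq
      obtain ⟨T, hTsub, hT⟩ := lindenbaum hcons
      have relST : ∀ q : Form α P, Form.box i q ∈ S.1 → q ∈ T := fun q hq =>
        hTsub (Set.mem_insert_of_mem _ hq)
      have hp : p ∈ T := (ih ⟨T, hT⟩).1 (hsat ⟨T, hT⟩ relST)
      have hnp : p.neg ∈ T := hTsub (Set.mem_insert _ _)
      exact mcs_not_fls hT (mcs_mp hT hnp hp)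
    · intro hmem T hrel
      exact (ih T).2 (hrel p hmem)

lemma axT' (i : α) (p : Form α P) : Prf AxS42 ((Form.box i p).imp p) :=
  Prf.ax (Or.inl ⟨i, p, rfl⟩)

lemma ax4' (i : α) (p : Form α P) :
    Prf AxS42 ((Form.box i p).imp (Form.box i (Form.box i p))) :=
  Prf.ax (Or.inr (Or.inl ⟨i, p, rfl⟩))

lemma ax2' (i : α) (p : Form α P) :
    Prf AxS42 (((Form.box i (Form.box i p).neg).neg).imp (Form.box i (Form.box i p.neg).neg)) :=
  Prf.ax (Or.inr (Or.inr ⟨i, p, rfl⟩))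

lemma can_refl : ReflexiveRel (canM (AxS42 (α := α) (P := P))).rel :=
  fun i S p hp => mcs_mp S.2 (mcs_prf S.2 (axT' i p)) hp

lemma can_trans : TransitiveRel (canM (AxS42 (α := α) (P := P))).rel :=
  fun i S _T _U h1 h2 p hp =>
    h2 p (h1 (Form.box i p) (mcs_mp S.2 (mcs_prf S.2 (ax4' i p)) hp))

lemma split_list {A B : Set (Form α P)} :
    ∀ l : List (Form α P), (∀ ψ ∈ l, ψ ∈ A ∪ B) →
      ∃ l1 l2 : List (Form α P), (∀ ψ ∈ l1, ψ ∈ A) ∧ (∀ ψ ∈ l2, ψ ∈ B) ∧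
        ∀ ψ ∈ l, ψ ∈ l1 ++ l2 := by
  intro l
  induction l with
  | nil => exact fun _ => ⟨[], [], by simp, by simp, by simp⟩
  | cons a l ih =>
    intro hm
    obtain ⟨l1, l2, h1, h2, h3⟩ := ih (fun ψ h => hm ψ (List.mem_cons_of_mem _ h))
    rcases hm a (List.mem_cons_self) with ha | ha
    · refine ⟨a :: l1, l2, ?_, h2, ?_⟩
      · intro ψ hψ
        rcases List.mem_cons.1 hψ with rfl | hh
        · exact ha
        · exact h1 _ hh
      · intro ψ hψ
        rcases List.mem_cons.1 hψ with rfl | hh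
        · exact List.mem_append_left _ (List.mem_cons_self)
        · rcases List.mem_append.1 (h3 _ hh) with h | h
          · exact List.mem_append_left _ (List.mem_cons_of_mem _ h)
          · exact List.mem_append_right _ h
    · refine ⟨l1, a :: l2, h1, ?_, ?_⟩
      · intro ψ hψ
        rcases List.mem_cons.1 hψ with rfl | hh
        · exact ha
        · exact h2 _ hh
      · intro ψ hψ
        rcases List.mem_cons.1 hψ with rfl | hh
        · exact List.mem_append_right _ (List.mem_cons_self)
        · rcases List.mem_append.1 (h3 _ hh) with h | h
          · exact List.mem_append_left _ h
          · exact List.mem_append_right _ (List.mem_cons_of_mem _ h)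

lemma can_directed : WeaklyDirected (canM (AxS42 (α := α) (P := P))).rel := by
  intro i S T U hST hSU
  have hcons : Consistent AxS42
      ({p : Form α P | Form.box i p ∈ T.1} ∪ {p : Form α P | Form.box i p ∈ U.1}) := by
    rintro ⟨l, m, d⟩
    obtain ⟨l1, l2, h1, h2, h3⟩ := split_list l m
    have d' : Prf AxS42 (imply (l1 ++ l2) Form.fls) := imply_subset h3 d
    rw [imply_append] at d'
    have hbc : Form.box i (imply l2 Form.fls) ∈ T.1 := by
      refine mcs_closed T.2 ⟨l1.map (Form.box i), ?_, imply_box i d'⟩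
      intro ψ hψ
      obtain ⟨q, hq, rfl⟩ := List.mem_map.1 hψ
      exact h1 q hq
    have h4 : Form.box i (Form.box i (imply l2 Form.fls)).neg ∉ S.1 := by
      intro hh
      exact mcs_not_fls T.2 (mcs_mp T.2 (hST _ hh) hbc)
    have h5 : (Form.box i (Form.box i (imply l2 Form.fls)).neg).neg ∈ S.1 :=
      (mcs_neg_iff S.2).2 h4
    have h6 : Form.box i (Form.box i (imply l2 Form.fls).neg).neg ∈ S.1 :=
      mcs_mp S.2 (mcs_prf S.2 (ax2' i (imply l2 Form.fls))) h5
    have h7 : (Form.box i (imply l2 Form.fls).neg).neg ∈ U.1 := hSU _ h6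
    have d2 : Prf AxS42 (imply l2 (imply l2 Form.fls).neg) :=
      imply_head (prf_id (imply l2 Form.fls))
    have hbcn : Form.box i (imply l2 Form.fls).neg ∈ U.1 := by
      refine mcs_closed U.2 ⟨l2.map (Form.box i), ?_, imply_box i d2⟩
      intro ψ hψ
      obtain ⟨q, hq, rfl⟩ := List.mem_map.1 hψ
      exact h2 q hq
    exact mcs_not_fls U.2 (mcs_mp U.2 h7 hbcn)
  obtain ⟨X, hXsub, hX⟩ := lindenbaum hcons
  exact ⟨⟨X, hX⟩, fun p hp => hXsub (Or.inl hp), fun p hp => hXsub (Or.inr hp)⟩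

end S42Aux

/-- Completeness of S4.2 from premises: if every world of every
Kripke model based on a weakly directed preorder (each relation reflexive,
transitive and weakly directed) that satisfies all of Γ satisfies φ
(propositional symbols and agent labels countable), then some γ₁,…,γ_m ∈ Γ give
⊢_{S4.2} γ₁ → (… → (γ_m → φ)…). -/
theorem imply_completeness_S42 {α P : Type} [Countable α] [Countable P]
    (Γ : Set (Form α P)) (φ : Form α P)
    (h : ∀ (W : Type) (M : Kripke α P W), Nonempty W →
         ReflexiveRel M.rel → TransitiveRel M.rel → WeaklyDirected M.rel →
         ∀ w : W, (∀ γ ∈ Γ, sat M w γ) → sat M w φ) :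
    ∃ l : List (Form α P), (∀ γ ∈ l, γ ∈ Γ) ∧ Prf AxS42 (imply l φ) := by
  by_contra hno
  have hΓcons : Consistent AxS42 (insert φ.neg Γ) := by
    rintro ⟨l, m, d⟩
    obtain ⟨l', m', d'⟩ := S42Aux.deduction m d
    exact hno ⟨l', m', (S42Aux.imply_mono (S42Aux.prf_dne φ) l').mp d'⟩
  obtain ⟨S, hsub, hS⟩ := S42Aux.lindenbaum hΓcons
  have hsat := h (S42Aux.canW AxS42) (S42Aux.canM AxS42) ⟨⟨S, hS⟩⟩
    S42Aux.can_refl S42Aux.can_trans S42Aux.can_directed ⟨S, hS⟩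
    (fun γ hγ => (S42Aux.truth γ ⟨S, hS⟩).2 (hsub (Set.mem_insert_of_mem _ hγ)))
  have hφ : φ ∈ S := (S42Aux.truth φ ⟨S, hS⟩).1 hsat
  have hnφ : φ.neg ∈ S := hsub (Set.mem_insert _ _)
  exact S42Aux.mcs_not_fls hS (S42Aux.mcs_mp hS hnφ hφ)
end

section
/- Soundness and completeness of topoS4: with countable sets of propositional symbols and agent labels, a formula φ is valid in all Kripke models whose accessibility relations are all reflexive and transitive (i.e., M, w ⊨ φ for every such model M and every world w) if and only if φ is a theorem of the system topoS4. -/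
/-- The system topoS4: propositional tautologies; axioms N (K_i ⊤),
R (K_i(φ∧ψ) ↔ K_iφ ∧ K_iψ), T and 4; closed under Modus Ponens and the
monotonicity rule M. -/
inductive TPrf {α P : Type} : Form α P → Prop
  | taut {p} : Tautology p → TPrf p
  | axN {i} : TPrf (Form.box i Form.top)
  | axR {i p q} : TPrf (Form.iff' (Form.box i (p.con q)) ((Form.box i p).con (Form.box i q)))
  | axT {i p} : TPrf ((Form.box i p).imp p)
  | ax4 {i p} : TPrf ((Form.box i p).imp (Form.box i (Form.box i p)))
  | mp {p q} : TPrf (p.imp q) → TPrf p → TPrf q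
  | rm {i p q} : TPrf (p.imp q) → TPrf ((Form.box i p).imp (Form.box i q))

/- ================= Auxiliary development ================= -/

namespace TopoS4Aux

variable {α P : Type} {Ax : Form α P → Prop}

/-! ### Propositional toolkit -/

lemma prf_id {p : Form α P} : Prf Ax (p.imp p) := by
  apply Prf.taut; intro g h; simp only [beval]
  cases beval g h p <;> rfl

/-- q → (p → q) -/
lemma prf_K0 {p q : Form α P} : Prf Ax (q.imp (p.imp q)) := by
  apply Prf.taut; intro g h; simp only [beval]
  cases beval g h p <;> cases beval g h q <;> rfl

lemma prf_W {p q : Form α P} (hq : Prf Ax q) : Prf Ax (p.imp q) :=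
  Prf.mp prf_K0 hq

/-- (q→r) → ((p→q)→(p→r)) -/
lemma prf_B0 {p q r : Form α P} :
    Prf Ax ((q.imp r).imp ((p.imp q).imp (p.imp r))) := by
  apply Prf.taut; intro g h; simp only [beval]
  cases beval g h p <;> cases beval g h q <;> cases beval g h r <;> rfl

lemma prf_B1 {p q r : Form α P} (h : Prf Ax (q.imp r)) :
    Prf Ax ((p.imp q).imp (p.imp r)) :=
  Prf.mp prf_B0 h

lemma prf_B2 {p q r : Form α P} (h1 : Prf Ax (p.imp q)) (h2 : Prf Ax (q.imp r)) :
    Prf Ax (p.imp r) :=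
  Prf.mp (prf_B1 h2) h1

/-- (A→(B→C)) → ((a→A)→((a→B)→(a→C))) -/
lemma prf_S0 {a A B C : Form α P} :
    Prf Ax ((A.imp (B.imp C)).imp ((a.imp A).imp ((a.imp B).imp (a.imp C)))) := by
  apply Prf.taut; intro g h; simp only [beval]
  cases beval g h a <;> cases beval g h A <;> cases beval g h B <;>
    cases beval g h C <;> rfl

lemma prf_S4comb {a A B C : Form α P} (h : Prf Ax (A.imp (B.imp C))) :
    Prf Ax ((a.imp A).imp ((a.imp B).imp (a.imp C))) :=
  Prf.mp prf_S0 h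

/-- (a→(b→c)) → (b→(a→c)), internal -/
lemma prf_commI {a b c : Form α P} :
    Prf Ax ((a.imp (b.imp c)).imp (b.imp (a.imp c))) := by
  apply Prf.taut; intro g h; simp only [beval]
  cases beval g h a <;> cases beval g h b <;> cases beval g h c <;> rfl

lemma prf_comm {a b c : Form α P} (h : Prf Ax (a.imp (b.imp c))) :
    Prf Ax (b.imp (a.imp c)) :=
  Prf.mp prf_commI h

/-- (a→(a→c)) → (a→c), internal contraction -/
lemma prf_contrI {a c : Form α P} :
    Prf Ax ((a.imp (a.imp c)).imp (a.imp c)) := by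
  apply Prf.taut; intro g h; simp only [beval]
  cases beval g h a <;> cases beval g h c <;> rfl

lemma prf_andI {p q : Form α P} : Prf Ax (p.imp (q.imp (p.con q))) := by
  apply Prf.taut; intro g h; simp only [beval]
  cases beval g h p <;> cases beval g h q <;> rfl

lemma prf_andE1 {p q : Form α P} : Prf Ax ((p.con q).imp p) := by
  apply Prf.taut; intro g h; simp only [beval]
  cases beval g h p <;> cases beval g h q <;> rfl

lemma prf_andE2 {p q : Form α P} : Prf Ax ((p.con q).imp q) := by
  apply Prf.taut; intro g h; simp only [beval]
  cases beval g h p <;> cases beval g h q <;> rfl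

lemma prf_uncurry {p q r : Form α P} (h : Prf Ax (p.imp (q.imp r))) :
    Prf Ax ((p.con q).imp r) := by
  refine Prf.mp ?_ h
  apply Prf.taut; intro g h'; simp only [beval]
  cases beval g h' p <;> cases beval g h' q <;> cases beval g h' r <;> rfl

lemma prf_curry {p q r : Form α P} (h : Prf Ax ((p.con q).imp r)) :
    Prf Ax (p.imp (q.imp r)) := by
  refine Prf.mp ?_ h
  apply Prf.taut; intro g h'; simp only [beval]
  cases beval g h' p <;> cases beval g h' q <;> cases beval g h' r <;> rfl

/-- K distribution in implicational form. -/
lemma prf_Kdist {i : α} {p q : Form α P} :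
    Prf Ax ((Form.box i (p.imp q)).imp ((Form.box i p).imp (Form.box i q))) :=
  prf_curry Prf.axK

/-- Monotonicity rule derived in `Prf`. -/
lemma prf_rm {i : α} {p q : Form α P} (h : Prf Ax (p.imp q)) :
    Prf Ax ((Form.box i p).imp (Form.box i q)) :=
  Prf.mp prf_Kdist (Prf.nec h)

/-! ### imply manipulation -/

lemma taut_imply_mp (l : List (Form α P)) (p q : Form α P) :
    Prf Ax ((imply l (p.imp q)).imp ((imply l p).imp (imply l q))) := by
  induction l with
  | nil => exact prf_id
  | cons a l ih => simpa [imply] using prf_S4comb (a := a) ih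

lemma imply_of_prf {l : List (Form α P)} {p : Form α P} (h : Prf Ax p) :
    Prf Ax (imply l p) := by
  induction l with
  | nil => exact h
  | cons a l ih => exact prf_W ih

/-- internal weakening: p → imply l p -/
lemma imply_intro (l : List (Form α P)) (p : Form α P) :
    Prf Ax (p.imp (imply l p)) := by
  induction l with
  | nil => exact prf_id
  | cons a l ih => exact prf_B2 ih prf_K0

lemma imply_weak_right (l l' : List (Form α P)) (p : Form α P) :
    Prf Ax ((imply l p).imp (imply (l ++ l') p)) := by
  induction l with
  | nil => simpa [imply] using imply_intro (Ax := Ax) l' p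
  | cons a l ih => simpa [imply] using prf_B1 (p := a) ih

lemma imply_weak_left (l' l : List (Form α P)) (p : Form α P) :
    Prf Ax ((imply l p).imp (imply (l' ++ l) p)) := by
  induction l' with
  | nil => exact prf_id
  | cons a l' ih =>
      show Prf Ax ((imply l p).imp (a.imp (imply (l' ++ l) p)))
      exact prf_B2 ih prf_K0

/-- exchange: (a → imply l q) → imply l (a → q) -/
lemma imply_exch (l : List (Form α P)) (a q : Form α P) :
    Prf Ax ((a.imp (imply l q)).imp (imply l (a.imp q))) := by
  induction l with
  | nil => exact prf_id
  | cons b l ih =>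
      show Prf Ax ((a.imp (b.imp (imply l q))).imp (b.imp (imply l (a.imp q))))
      exact prf_B2 prf_commI (prf_B1 (p := b) ih)

lemma imply_mono (l : List (Form α P)) {X Y : Form α P} (h : Prf Ax (X.imp Y)) :
    Prf Ax ((imply l X).imp (imply l Y)) := by
  induction l with
  | nil => exact h
  | cons a l ih => exact prf_B1 ih

/-! ### Provability from a context -/

def Prv (Ax : Form α P → Prop) (Γ : Set (Form α P)) (p : Form α P) : Prop :=
  ∃ l : List (Form α P), (∀ ψ ∈ l, ψ ∈ Γ) ∧ Prf Ax (imply l p)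

lemma Prv.of_prf {Γ : Set (Form α P)} {p : Form α P} (h : Prf Ax p) : Prv Ax Γ p :=
  ⟨[], by simp, h⟩

lemma Prv.of_mem {Γ : Set (Form α P)} {p : Form α P} (h : p ∈ Γ) : Prv Ax Γ p :=
  ⟨[p], by simpa using h, by simpa [imply] using (prf_id (Ax := Ax) (p := p))⟩

lemma Prv.mp {Γ : Set (Form α P)} {p q : Form α P}
    (h1 : Prv Ax Γ (p.imp q)) (h2 : Prv Ax Γ p) : Prv Ax Γ q := by
  obtain ⟨l1, hl1, hp1⟩ := h1
  obtain ⟨l2, hl2, hp2⟩ := h2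
  refine ⟨l1 ++ l2, ?_, ?_⟩
  · intro ψ hψ; rcases List.mem_append.1 hψ with h | h
    · exact hl1 ψ h
    · exact hl2 ψ h
  · have a1 : Prf Ax (imply (l1 ++ l2) (p.imp q)) :=
      Prf.mp (imply_weak_right l1 l2 _) hp1
    have a2 : Prf Ax (imply (l1 ++ l2) p) :=
      Prf.mp (imply_weak_left l1 l2 _) hp2
    exact Prf.mp (Prf.mp (taut_imply_mp _ _ _) a1) a2

lemma Prv.mono {Γ Δ : Set (Form α P)} {p : Form α P}
    (h : Prv Ax Γ p) (hsub : Γ ⊆ Δ) : Prv Ax Δ p := by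
  obtain ⟨l, hl, hp⟩ := h
  exact ⟨l, fun ψ hψ => hsub (hl ψ hψ), hp⟩

lemma not_consistent_iff {Γ : Set (Form α P)} :
    ¬ Consistent Ax Γ ↔ Prv Ax Γ Form.fls := by
  unfold Consistent; rw [not_not]; rfl

/-- Deduction lemma. -/
lemma deduce {Γ : Set (Form α P)} {φ : Form α P} {l : List (Form α P)} {q : Form α P}
    (hl : ∀ ψ ∈ l, ψ ∈ Γ ∪ {φ}) (hp : Prf Ax (imply l q)) :
    Prv Ax Γ (φ.imp q) := by
  induction l generalizing q with
  | nil => exact Prv.of_prf (prf_W hp)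
  | cons a l ih =>
      have hmem := hl a (by simp)
      have hl' : ∀ ψ ∈ l, ψ ∈ Γ ∪ {φ} := fun ψ hψ => hl ψ (by simp [hψ])
      have hx : Prf Ax (imply l (a.imp q)) := Prf.mp (imply_exch l a q) hp
      have hPrv : Prv Ax Γ (φ.imp (a.imp q)) := ih hl' hx
      rcases hmem with hmem | hmem
      · -- a ∈ Γ
        obtain ⟨l0, h0, hp0⟩ := hPrv
        have : Prv Ax Γ (a.imp (φ.imp q)) :=
          ⟨l0, h0, Prf.mp (imply_mono l0 prf_commI) hp0⟩
        exact Prv.mp this (Prv.of_mem hmem)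
      · -- a = φ
        rcases hmem with rfl
        obtain ⟨l0, h0, hp0⟩ := hPrv
        exact ⟨l0, h0, Prf.mp (imply_mono l0 prf_contrI) hp0⟩

end TopoS4Aux

namespace TopoS4Aux

variable {α P : Type} {Ax : Form α P → Prop}

lemma consistent_of_subset {Γ Δ : Set (Form α P)} (h : Consistent Ax Δ)
    (hsub : Γ ⊆ Δ) : Consistent Ax Γ := by
  intro ⟨l, hl, hp⟩
  exact h ⟨l, fun ψ hψ => hsub (hl ψ hψ), hp⟩

/-- Lindenbaum's lemma via Zorn. -/
lemma lindenbaum {Γ : Set (Form α P)} (h : Consistent Ax Γ) :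
    ∃ Δ, Γ ⊆ Δ ∧ MaximalConsistent Ax Δ := by
  obtain ⟨Δ, hΓΔ, hmax⟩ := zorn_subset_nonempty {Δ : Set (Form α P) | Consistent Ax Δ}
    (fun c hc hchain ⟨S, hS⟩ => by
      refine ⟨⋃₀ c, ?_, fun s hs => Set.subset_sUnion_of_mem hs⟩
      intro ⟨l, hl, hp⟩
      -- find a single member of the chain containing all of l
      have : ∃ D ∈ c, ∀ ψ ∈ l, ψ ∈ D := by
        clear hp
        induction l with
        | nil => exact ⟨S, hS, by simp⟩
        | cons a l ih =>
            obtain ⟨D, hD, hDl⟩ := ih (fun ψ hψ => hl ψ (by simp [hψ]))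
            obtain ⟨E, hE, haE⟩ := Set.mem_sUnion.1 (hl a (by simp))
            rcases hchain.total hD hE with hDE | hED
            · exact ⟨E, hE, by
                intro ψ hψ; rcases List.mem_cons.1 hψ with rfl | hψ
                · exact haE
                · exact hDE (hDl ψ hψ)⟩
            · exact ⟨D, hD, by
                intro ψ hψ; rcases List.mem_cons.1 hψ with rfl | hψ
                · exact hED haE
                · exact hDl ψ hψ⟩
      obtain ⟨D, hDc, hD⟩ := this
      exact hc hDc ⟨l, hD, hp⟩) Γ h
  refine ⟨Δ, hΓΔ, hmax.1, fun φ => ?_⟩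
  by_contra hcon
  push_neg at hcon
  obtain ⟨h1, h2⟩ := hcon
  -- both Δ ∪ {φ} and Δ ∪ {φ.neg} must be inconsistent
  have incons : ∀ ψ : Form α P, ψ ∉ Δ → ¬ Consistent Ax (Δ ∪ {ψ}) := by
    intro ψ hψ hcons
    have := hmax.2 (y := Δ ∪ {ψ}) hcons Set.subset_union_left
    exact hψ (this (by simp))
  have i1 := (not_consistent_iff).1 (incons φ h1)
  have i2 := (not_consistent_iff).1 (incons φ.neg h2)
  obtain ⟨l1, hl1, hp1⟩ := i1
  obtain ⟨l2, hl2, hp2⟩ := i2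
  have d1 : Prv Ax Δ (φ.imp Form.fls) := deduce hl1 hp1
  have d2 : Prv Ax Δ (φ.neg.imp Form.fls) := deduce hl2 hp2
  have dfls : Prv Ax Δ Form.fls := Prv.mp d2 d1
  exact hmax.1 dfls

/-! ### Maximal consistent set facts -/

variable {Γ : Set (Form α P)} (hΓ : MaximalConsistent Ax Γ)

include hΓ

lemma mcs_prv_mem {p : Form α P} (h : Prv Ax Γ p) : p ∈ Γ := by
  rcases hΓ.2 p with hp | hp
  · exact hp
  · exfalso
    exact hΓ.1 (Prv.mp (Prv.of_mem hp) h)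

lemma mcs_mem_of_prf {p : Form α P} (h : Prf Ax p) : p ∈ Γ :=
  mcs_prv_mem hΓ (Prv.of_prf h)

lemma mcs_mp {p q : Form α P} (h1 : p.imp q ∈ Γ) (h2 : p ∈ Γ) : q ∈ Γ :=
  mcs_prv_mem hΓ (Prv.mp (Prv.of_mem h1) (Prv.of_mem h2))

lemma mcs_fls : Form.fls ∉ Γ := fun h => hΓ.1 (Prv.of_mem h)

lemma mcs_neg_iff {p : Form α P} : p.neg ∈ Γ ↔ p ∉ Γ := by
  constructor
  · intro h1 h2
    exact mcs_fls hΓ (mcs_mp hΓ h1 h2)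
  · intro h1
    rcases hΓ.2 p with h | h
    · exact absurd h h1
    · exact h

lemma mcs_imp_iff {p q : Form α P} : p.imp q ∈ Γ ↔ (p ∈ Γ → q ∈ Γ) := by
  constructor
  · exact fun h hp => mcs_mp hΓ h hp
  · intro h
    rcases hΓ.2 p with hp | hp
    · exact mcs_prv_mem hΓ (Prv.mp (Prv.of_prf prf_K0) (Prv.of_mem (h hp)))
    · -- ¬p ∈ Γ: (p→⊥) → (p→q)
      refine mcs_prv_mem hΓ (Prv.mp (Prv.of_prf ?_) (Prv.of_mem hp))
      apply Prf.taut; intro g h'; simp only [Form.neg, beval]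
      cases beval g h' p <;> cases beval g h' q <;> rfl

lemma mcs_con_iff {p q : Form α P} : p.con q ∈ Γ ↔ (p ∈ Γ ∧ q ∈ Γ) := by
  constructor
  · intro h
    exact ⟨mcs_prv_mem hΓ (Prv.mp (Prv.of_prf prf_andE1) (Prv.of_mem h)),
           mcs_prv_mem hΓ (Prv.mp (Prv.of_prf prf_andE2) (Prv.of_mem h))⟩
  · intro ⟨h1, h2⟩
    exact mcs_prv_mem hΓ (Prv.mp (Prv.mp (Prv.of_prf prf_andI) (Prv.of_mem h1))
      (Prv.of_mem h2))

lemma mcs_dis_iff {p q : Form α P} : p.dis q ∈ Γ ↔ (p ∈ Γ ∨ q ∈ Γ) := by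
  constructor
  · intro h
    by_contra hc
    push_neg at hc
    have hnp := (mcs_neg_iff hΓ).2 hc.1
    have hnq := (mcs_neg_iff hΓ).2 hc.2
    have : Prf Ax ((p.dis q).imp (p.neg.imp (q.neg.imp Form.fls))) := by
      apply Prf.taut; intro g h'; simp only [Form.neg, beval]
      cases beval g h' p <;> cases beval g h' q <;> rfl
    exact mcs_fls hΓ <| mcs_prv_mem hΓ <|
      Prv.mp (Prv.mp (Prv.mp (Prv.of_prf this) (Prv.of_mem h)) (Prv.of_mem hnp))
        (Prv.of_mem hnq)
  · intro h
    have t1 : Prf Ax (p.imp (p.dis q)) := by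
      apply Prf.taut; intro g h'; simp only [beval]
      cases beval g h' p <;> cases beval g h' q <;> rfl
    have t2 : Prf Ax (q.imp (p.dis q)) := by
      apply Prf.taut; intro g h'; simp only [beval]
      cases beval g h' p <;> cases beval g h' q <;> rfl
    rcases h with h | h
    · exact mcs_prv_mem hΓ (Prv.mp (Prv.of_prf t1) (Prv.of_mem h))
    · exact mcs_prv_mem hΓ (Prv.mp (Prv.of_prf t2) (Prv.of_mem h))

end TopoS4Aux

namespace TopoS4Aux

variable {α P : Type}

/-! ### Soundness -/

lemma sat_of_taut {W : Type} (M : Kripke α P W) (w : W) {p : Form α P}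
    (h : Tautology p) : sat M w p := by
  classical
  set g : P → Bool := fun x => decide (M.val w x) with hg
  set h' : Form α P → Bool := fun q => decide (sat M w q) with hh
  have key : ∀ q : Form α P, sat M w q ↔ beval g h' q = true := by
    intro q
    induction q with
    | fls => simp [sat, beval]
    | var x => simp [sat, beval, hg]
    | dis a b iha ihb => simp [sat, beval, iha, ihb]
    | con a b iha ihb => simp [sat, beval, iha, ihb]
    | imp a b iha ihb =>
        simp only [sat, beval, Bool.or_eq_true, Bool.not_eq_true', iha, ihb]
        cases hba : beval g h' a <;> simp [hba]
    | box i a ih =>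
        show sat M w (Form.box i a) ↔ h' (Form.box i a) = true
        rw [hh]; exact decide_eq_true_iff.symm
  exact (key p).2 (h g h')

lemma soundness_S4 {p : Form α P} (h : Prf (AxS4 (α := α) (P := P)) p)
    {W : Type} (M : Kripke α P W) (hr : ReflexiveRel M.rel)
    (ht : TransitiveRel M.rel) : ∀ w : W, sat M w p := by
  induction h with
  | taut htaut => exact fun w => sat_of_taut M w htaut
  | @axK i q r =>
      intro w
      rintro ⟨h1, h2⟩ v hv
      exact h1 v hv (h2 v hv)
  | ax hax =>
      rcases hax with ⟨i, q, rfl⟩ | ⟨i, q, rfl⟩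
      · exact fun w hb => hb w (hr i w)
      · exact fun w hb v hwv u hvu => hb u (ht i w v u hwv hvu)
  | mp h1 h2 ih1 ih2 => exact fun w => ih1 w (ih2 w)
  | nec h ih => exact fun w v _ => ih v

lemma consistent_empty : Consistent (AxS4 (α := α) (P := P)) ∅ := by
  rintro ⟨l, hl, hp⟩
  have hl0 : l = [] := by
    cases l with
    | nil => rfl
    | cons a l => exact absurd (hl a (by simp)) (by simp)
  subst hl0
  have := soundness_S4 (p := Form.fls) hp
    (M := ⟨fun _ _ => True, fun _ _ _ => True⟩)
    (fun _ _ => trivial) (fun _ _ _ _ _ _ => trivial) PUnit.unit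
  exact this

/-! ### Canonical model -/

def canW (α P : Type) : Type :=
  {Γ : Set (Form α P) // MaximalConsistent (AxS4 (α := α) (P := P)) Γ}

def canM (α P : Type) : Kripke α P (canW α P) where
  val Γ x := Form.var x ∈ Γ.1
  rel i Γ Δ := ∀ p : Form α P, Form.box i p ∈ Γ.1 → p ∈ Δ.1

lemma canM_refl : ReflexiveRel (canM α P).rel := by
  intro i Γ p hp
  exact mcs_mp Γ.2 (mcs_mem_of_prf Γ.2 (Prf.ax (Or.inl ⟨i, p, rfl⟩))) hp

lemma canM_trans : TransitiveRel (canM α P).rel := by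
  intro i Γ Δ E h1 h2 p hp
  have h4 : Form.box i (Form.box i p) ∈ Γ.1 :=
    mcs_mp Γ.2 (mcs_mem_of_prf Γ.2 (Prf.ax (Or.inr ⟨i, p, rfl⟩))) hp
  exact h2 p (h1 _ h4)

lemma box_imply_int {Ax : Form α P → Prop} (i : α) (l : List (Form α P))
    (p : Form α P) :
    Prf Ax ((Form.box i (imply l p)).imp (imply (l.map (Form.box i)) (Form.box i p))) := by
  induction l with
  | nil => exact prf_id
  | cons a l ih =>
      show Prf Ax ((Form.box i (a.imp (imply l p))).imp
        ((Form.box i a).imp (imply (l.map (Form.box i)) (Form.box i p))))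
      exact prf_B2 prf_Kdist (prf_B1 ih)

lemma truth_lemma (p : Form α P) (Γ : canW α P) :
    sat (canM α P) Γ p ↔ p ∈ Γ.1 := by
  induction p generalizing Γ with
  | fls => simpa [sat] using fun h => mcs_fls Γ.2 h
  | var x => simp [sat, canM]
  | dis a b iha ihb => simp [sat, iha, ihb, mcs_dis_iff Γ.2]
  | con a b iha ihb => simp [sat, iha, ihb, mcs_con_iff Γ.2]
  | imp a b iha ihb => simp [sat, iha, ihb, mcs_imp_iff Γ.2]
  | box i a ih =>
      constructor
      · intro hs
        by_contra hn
        set S : Set (Form α P) := {q | Form.box i q ∈ Γ.1} ∪ {a.neg} with hS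
        have hScons : Consistent AxS4 S := by
          rintro ⟨l, hl, hp⟩
          have hded : Prv AxS4 {q | Form.box i q ∈ Γ.1} (a.neg.imp Form.fls) :=
            deduce hl hp
          have hdne : Prf (AxS4 (α := α) (P := P)) ((a.neg.imp Form.fls).imp a) := by
            apply Prf.taut; intro g h'; simp only [Form.neg, beval]
            cases beval g h' a <;> rfl
          obtain ⟨l0, h0, hp0⟩ := Prv.mp (Prv.of_prf hdne) hded
          have hboxed : Prf (AxS4 (α := α) (P := P))
              (imply (l0.map (Form.box i)) (Form.box i a)) :=
            Prf.mp (box_imply_int i l0 a) (Prf.nec hp0)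
          have : Form.box i a ∈ Γ.1 := by
            refine mcs_prv_mem Γ.2 ⟨l0.map (Form.box i), ?_, hboxed⟩
            intro ψ hψ
            obtain ⟨q, hq, rfl⟩ := List.mem_map.1 hψ
            exact h0 q hq
          exact hn this
        obtain ⟨Δ, hSΔ, hΔ⟩ := lindenbaum hScons
        have hrel : (canM α P).rel i Γ ⟨Δ, hΔ⟩ := by
          intro q hq
          exact hSΔ (Or.inl hq)
        have hsa : sat (canM α P) ⟨Δ, hΔ⟩ a := hs _ hrel
        have hmem : a ∈ Δ := (ih _).1 hsa
        have hneg : a.neg ∈ Δ := hSΔ (Or.inr rfl)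
        exact (mcs_neg_iff hΔ).1 hneg hmem
      · intro hmem Δ hrel
        exact (ih Δ).2 (hrel a hmem)

/-- Completeness for `Prf AxS4`. -/
lemma completeness_S4 {φ : Form α P}
    (h : ∀ (W : Type) (M : Kripke α P W), Nonempty W →
      ReflexiveRel M.rel → TransitiveRel M.rel → ∀ w : W, sat M w φ) :
    Prf (AxS4 (α := α) (P := P)) φ := by
  by_contra hn
  have hcons : Consistent (AxS4 (α := α) (P := P)) {φ.neg} := by
    rintro ⟨l, hl, hp⟩
    have hl' : ∀ ψ ∈ l, ψ ∈ (∅ : Set (Form α P)) ∪ {φ.neg} := by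
      intro ψ hψ; exact Or.inr (hl ψ hψ)
    obtain ⟨l0, h0, hp0⟩ := deduce hl' hp
    have hl0 : l0 = [] := by
      cases l0 with
      | nil => rfl
      | cons b l0 => exact absurd (h0 b (by simp)) (by simp)
    subst hl0
    have hdne : Prf (AxS4 (α := α) (P := P)) ((φ.neg.imp Form.fls).imp φ) := by
      apply Prf.taut; intro g h'; simp only [Form.neg, beval]
      cases beval g h' φ <;> rfl
    exact hn (Prf.mp hdne hp0)
  obtain ⟨Δ, hSΔ, hΔ⟩ := lindenbaum hcons
  have hval := h (canW α P) (canM α P) ⟨⟨Δ, hΔ⟩⟩ canM_refl canM_trans ⟨Δ, hΔ⟩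
  have hmem : φ ∈ Δ := (truth_lemma φ ⟨Δ, hΔ⟩).1 hval
  exact (mcs_neg_iff hΔ).1 (hSΔ rfl) hmem

end TopoS4Aux

namespace TopoS4Aux

variable {α P : Type}

/-! ### TPrf toolkit -/

lemma tprf_B2 {p q r : Form α P} (h1 : TPrf (p.imp q)) (h2 : TPrf (q.imp r)) :
    TPrf (p.imp r) := by
  refine TPrf.mp (TPrf.mp (TPrf.taut ?_) h2) h1
  intro g h; simp only [beval]
  cases beval g h p <;> cases beval g h q <;> cases beval g h r <;> rfl

lemma tprf_conI {p q : Form α P} (h1 : TPrf p) (h2 : TPrf q) : TPrf (p.con q) := by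
  refine TPrf.mp (TPrf.mp (TPrf.taut ?_) h1) h2
  intro g h; simp only [beval]
  cases beval g h p <;> cases beval g h q <;> rfl

lemma tprf_nec {i : α} {p : Form α P} (h : TPrf p) : TPrf (Form.box i p) := by
  have h1 : TPrf ((Form.top (α := α) (P := P)).imp p) := by
    refine TPrf.mp (TPrf.taut ?_) h
    intro g h'; simp only [beval, Form.top, Form.neg]
    cases beval g h' p <;> rfl
  exact TPrf.mp (TPrf.rm h1) TPrf.axN

/-- axiom K is derivable in topoS4. -/
lemma tprf_axK {i : α} {p q : Form α P} :
    TPrf (((Form.box i (p.imp q)).con (Form.box i p)).imp (Form.box i q)) := by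
  have t1 : TPrf (((p.imp q).con p).imp q) := by
    apply TPrf.taut; intro g h; simp only [beval]
    cases beval g h p <;> cases beval g h q <;> rfl
  have t2 : TPrf ((Form.box i ((p.imp q).con p)).imp (Form.box i q)) := TPrf.rm t1
  have t3 : TPrf (Form.iff' (Form.box i ((p.imp q).con p))
      ((Form.box i (p.imp q)).con (Form.box i p))) := TPrf.axR
  have t4 : TPrf (((Form.box i (p.imp q)).con (Form.box i p)).imp
      (Form.box i ((p.imp q).con p))) := by
    refine TPrf.mp (TPrf.taut ?_) t3
    intro g h; simp only [beval, Form.iff']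
    cases h (Form.box i ((p.imp q).con p)) <;>
      cases h (Form.box i (p.imp q)) <;> cases h (Form.box i p) <;> rfl
  exact tprf_B2 t4 t2

lemma tprf_of_prf {p : Form α P} (h : Prf (AxS4 (α := α) (P := P)) p) : TPrf p := by
  induction h with
  | taut ht => exact TPrf.taut ht
  | axK => exact tprf_axK
  | ax hax =>
      rcases hax with ⟨i, q, rfl⟩ | ⟨i, q, rfl⟩
      · exact TPrf.axT
      · exact TPrf.ax4
  | mp h1 h2 ih1 ih2 => exact TPrf.mp ih1 ih2
  | nec h ih => exact tprf_nec ih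

lemma prf_of_tprf {p : Form α P} (h : TPrf p) : Prf (AxS4 (α := α) (P := P)) p := by
  induction h with
  | taut ht => exact Prf.taut ht
  | @axN i =>
      refine Prf.nec (Prf.taut ?_)
      intro g h; rfl
  | @axR i q r =>
      have d1 : Prf (AxS4 (α := α) (P := P))
          ((Form.box i (q.con r)).imp ((Form.box i q).con (Form.box i r))) := by
        have h1 : Prf (AxS4 (α := α) (P := P))
            ((Form.box i (q.con r)).imp (Form.box i q)) := prf_rm prf_andE1
        have h2 : Prf (AxS4 (α := α) (P := P))
            ((Form.box i (q.con r)).imp (Form.box i r)) := prf_rm prf_andE2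
        exact Prf.mp (Prf.mp (prf_S4comb prf_andI) h1) h2
      have d2 : Prf (AxS4 (α := α) (P := P))
          (((Form.box i q).con (Form.box i r)).imp (Form.box i (q.con r))) := by
        have h3 : Prf (AxS4 (α := α) (P := P))
            ((Form.box i q).imp (Form.box i (r.imp (q.con r)))) := prf_rm prf_andI
        exact prf_uncurry (prf_B2 h3 prf_Kdist)
      exact Prf.mp (Prf.mp prf_andI d1) d2
  | axT => exact Prf.ax (Or.inl ⟨_, _, rfl⟩)
  | ax4 => exact Prf.ax (Or.inr ⟨_, _, rfl⟩)
  | mp h1 h2 ih1 ih2 => exact Prf.mp ih1 ih2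
  | rm h ih => exact prf_rm ih

end TopoS4Aux

/-- Soundness and completeness of topoS4: with countable
propositional symbols and agent labels, a formula is valid in all Kripke models
whose accessibility relations are reflexive and transitive iff it is a theorem
of topoS4. -/
theorem main_topoS4 {α P : Type} [Countable α] [Countable P] (φ : Form α P) :
    (∀ (W : Type) (M : Kripke α P W), Nonempty W →
       ReflexiveRel M.rel → TransitiveRel M.rel →
       ∀ w : W, sat M w φ) ↔ TPrf φ := by
  constructor
  · intro h
    exact TopoS4Aux.tprf_of_prf (TopoS4Aux.completeness_S4 h)
  · intro h W M _ hr ht w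
    exact TopoS4Aux.soundness_S4 (TopoS4Aux.prf_of_tprf h) M hr ht w
end
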